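/- arXiv:1609.08212 — 4 statements merged into one kernel-verified Lean document; each statement's English description precedes it below -/
import Mathlib

section
/- Let H be a connected linear hypergraph and let X, Y be two disjoint nonempty sets of vertices of H. Then H contains a linear path with one endpoint in X and one endpoint in Y. -/
/-- The shadow graph of a hypergraph: two vertices are adjacent if they lie
together in some hyperedge. -/
def shadowGraph {V : Type*} (E : Finset (Finset V)) : SimpleGraph V where
  Adj u v := u ≠ v ∧ ∃ e ∈ E, u ∈ e ∧ v ∈ e
  symm := by
    constructor
    intro u v ⟨huv, e, he, hu, hv⟩
    exact ⟨huv.symm, e, he, hv, hu⟩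
  loopless := by constructor; intro v ⟨h, _⟩; exact h rfl

/-- A linear path of length ℓ in a hypergraph with edge set E: edges
e 0, ..., e (ℓ-1), consecutive ones meeting in exactly one vertex,
non-consecutive ones disjoint. -/
def IsLinearPath {V : Type*} [DecidableEq V] (E : Finset (Finset V))
    (ℓ : ℕ) (e : ℕ → Finset V) : Prop :=
  (∀ i < ℓ, e i ∈ E) ∧
  (∀ i j, i < j → j < ℓ → e i ≠ e j) ∧
  (∀ i, i + 1 < ℓ → (e i ∩ e (i + 1)).card = 1) ∧
  (∀ i j, i + 2 ≤ j → j < ℓ → e i ∩ e j = ∅)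

/-!
Take a shortest walk `x = v₀, v₁, …, v_ℓ = y` in the shadow graph and, for each step, a
hyperedge `fᵢ ∋ vᵢ, vᵢ₊₁`. Along a shortest walk `dist vᵢ vⱼ = j - i`, while any two vertices
of a hyperedge are at distance at most one. Hence `fᵢ` contains no walk vertex other than
`vᵢ, vᵢ₊₁`, and `fᵢ ∩ fⱼ ≠ ∅` forces `|i - j| ≤ 1`: the `fᵢ` are distinct, non-consecutive ones
are disjoint, `x` lies only in `f₀` and `y` only in `f_{ℓ-1}`. Consecutive hyperedges share
`vᵢ₊₁`, and by linearity nothing else.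
-/

namespace SimpleGraph.Walk

variable {V : Type*} {G : SimpleGraph V} {u v : V}

theorem sub_le_dist_getVert_of_length_eq_dist {p : G.Walk u v} (hp : p.length = G.dist u v)
    (i : ℕ) {j : ℕ} (hj : j ≤ p.length) : j - i ≤ G.dist (p.getVert i) (p.getVert j) := by
  have hstart : G.dist u (p.getVert i) ≤ i :=
    (dist_le (p.take i)).trans ((p.take_length i).trans_le (min_le_left _ _))
  have hend : G.dist (p.getVert j) v ≤ p.length - j :=
    (dist_le (p.drop j)).trans_eq (p.drop_length j)
  have htri : G.dist u v ≤
      G.dist u (p.getVert i) + (G.dist (p.getVert i) (p.getVert j) + G.dist (p.getVert j) v) :=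
    (Reachable.dist_triangle_left ⟨p.take i⟩ v).trans
      (Nat.add_le_add_left (Reachable.dist_triangle_right ⟨p.drop j⟩ _) _)
  omega

end SimpleGraph.Walk

section Hypergraph

variable {V : Type*} {E : Finset (Finset V)} {e e' : Finset V} {u v w : V}

theorem shadowGraph_reachable_of_mem (he : e ∈ E) (hu : u ∈ e) (hv : v ∈ e) :
    (shadowGraph E).Reachable u v := by
  by_cases huv : u = v
  · exact huv ▸ SimpleGraph.Reachable.refl u
  · exact SimpleGraph.Adj.reachable (G := shadowGraph E) ⟨huv, e, he, hu, hv⟩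

theorem shadowGraph_dist_le_one (he : e ∈ E) (hu : u ∈ e) (hv : v ∈ e) :
    (shadowGraph E).dist u v ≤ 1 := by
  by_cases huv : u = v
  · simp [huv]
  · exact SimpleGraph.dist_le
      (SimpleGraph.Adj.toWalk (G := shadowGraph E) ⟨huv, e, he, hu, hv⟩)

theorem shadowGraph_dist_le_two (he : e ∈ E) (he' : e' ∈ E) (hu : u ∈ e) (hw : w ∈ e)
    (hw' : w ∈ e') (hv : v ∈ e') : (shadowGraph E).dist u v ≤ 2 :=
  ((shadowGraph_reachable_of_mem he hu hw).dist_triangle_left v).trans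
    (Nat.add_le_add (shadowGraph_dist_le_one he hu hw) (shadowGraph_dist_le_one he' hw' hv))

def IsHyperedgeLift (E : Finset (Finset V)) (p : (shadowGraph E).Walk u v)
    (f : ℕ → Finset V) : Prop :=
  ∀ i < p.length, f i ∈ E ∧ p.getVert i ∈ f i ∧ p.getVert (i + 1) ∈ f i

theorem exists_isHyperedgeLift (p : (shadowGraph E).Walk u v) :
    ∃ f, IsHyperedgeLift E p f := by
  choose! f hf using fun i (hi : i < p.length) ↦ (p.adj_getVert_succ hi).2
  exact ⟨f, hf⟩

namespace IsHyperedgeLift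

variable {p : (shadowGraph E).Walk u v} {f : ℕ → Finset V}

theorem sub_le_one_of_getVert_mem (hf : IsHyperedgeLift E p f)
    (hp : p.length = (shadowGraph E).dist u v)
    {a b j : ℕ} (hj : j < p.length) (hb : b ≤ p.length)
    (ha : p.getVert a ∈ f j) (hb' : p.getVert b ∈ f j) : b - a ≤ 1 :=
  (p.sub_le_dist_getVert_of_length_eq_dist hp a hb).trans
    (shadowGraph_dist_le_one (hf j hj).1 ha hb')

theorem ne (hf : IsHyperedgeLift E p f)
    (hp : p.length = (shadowGraph E).dist u v)
    {i j : ℕ} (hij : i < j) (hj : j < p.length) : f i ≠ f j := by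
  intro heq
  have := hf.sub_le_one_of_getVert_mem hp hj (by omega : j + 1 ≤ p.length)
    (heq ▸ (hf i (by omega)).2.1) (hf j hj).2.2
  omega

theorem inter_eq_empty [DecidableEq V] (hf : IsHyperedgeLift E p f)
    (hp : p.length = (shadowGraph E).dist u v)
    {i j : ℕ} (hij : i + 2 ≤ j) (hj : j < p.length) : f i ∩ f j = ∅ := by
  refine Finset.eq_empty_of_forall_notMem fun w hw ↦ ?_
  rw [Finset.mem_inter] at hw
  have hfi := hf i (by omega)
  have hfj := hf j hj
  have := (p.sub_le_dist_getVert_of_length_eq_dist hp i (j := j + 1) (by omega)).trans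
    (shadowGraph_dist_le_two hfi.1 hfj.1 hfi.2.1 hw.1 hw.2 hfj.2.2)
  omega

theorem card_inter_succ [DecidableEq V] (hf : IsHyperedgeLift E p f)
    (hp : p.length = (shadowGraph E).dist u v)
    (hlin : ∀ e ∈ E, ∀ e' ∈ E, e ≠ e' → (e ∩ e').card ≤ 1) {i : ℕ} (hi : i + 1 < p.length) :
    (f i ∩ f (i + 1)).card = 1 := by
  have hfi := hf i (by omega)
  have hfi' := hf (i + 1) hi
  have hshared : (f i ∩ f (i + 1)).Nonempty :=
    ⟨_, Finset.mem_inter.mpr ⟨hfi.2.2, hfi'.2.1⟩⟩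
  have := hlin _ hfi.1 _ hfi'.1 (hf.ne hp (Nat.lt_succ_self i) hi)
  have := hshared.card_pos
  omega

theorem isLinearPath [DecidableEq V] (hf : IsHyperedgeLift E p f)
    (hp : p.length = (shadowGraph E).dist u v)
    (hlin : ∀ e ∈ E, ∀ e' ∈ E, e ≠ e' → (e ∩ e').card ≤ 1) : IsLinearPath E p.length f :=
  ⟨fun i hi ↦ (hf i hi).1, fun _ _ hij hj ↦ hf.ne hp hij hj,
    fun _ hi ↦ hf.card_inter_succ hp hlin hi, fun _ _ hij hj ↦ hf.inter_eq_empty hp hij hj⟩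

theorem start_notMem (hf : IsHyperedgeLift E p f)
    (hp : p.length = (shadowGraph E).dist u v)
    {i : ℕ} (hi : 1 ≤ i) (hi' : i < p.length) : u ∉ f i := by
  intro hu
  have := hf.sub_le_one_of_getVert_mem hp hi' (by omega : i + 1 ≤ p.length)
    (p.getVert_zero ▸ hu) (hf i hi').2.2
  omega

theorem end_notMem (hf : IsHyperedgeLift E p f)
    (hp : p.length = (shadowGraph E).dist u v)
    {i : ℕ} (hi : i < p.length - 1) : v ∉ f i := by
  intro hv
  have := hf.sub_le_one_of_getVert_mem hp (by omega : i < p.length) le_rfl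
    (hf i (by omega)).2.1 (by rwa [p.getVert_length])
  omega

end IsHyperedgeLift

end Hypergraph

theorem stmt_5_general {V : Type*} [DecidableEq V] (E : Finset (Finset V))
    (hlin : ∀ e ∈ E, ∀ f ∈ E, e ≠ f → (e ∩ f).card ≤ 1)
    (hconn : (shadowGraph E).Connected)
    (X Y : Finset V) (hXY : Disjoint X Y) (hX : X.Nonempty) (hY : Y.Nonempty) :
    ∃ (ℓ : ℕ) (e : ℕ → Finset V), 1 ≤ ℓ ∧ IsLinearPath E ℓ e ∧
      (∃ x ∈ X, x ∈ e 0 ∧ ∀ i, 1 ≤ i → i < ℓ → x ∉ e i) ∧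
      (∃ y ∈ Y, y ∈ e (ℓ - 1) ∧ ∀ i, i < ℓ - 1 → y ∉ e i) := by
  obtain ⟨x, hx⟩ := hX
  obtain ⟨y, hy⟩ := hY
  have hxy : x ≠ y := fun h ↦ Finset.disjoint_left.mp hXY hx (h ▸ hy)
  obtain ⟨p, hp⟩ := hconn.exists_walk_length_eq_dist x y
  obtain ⟨f, hf⟩ := exists_isHyperedgeLift p
  have hlen : 1 ≤ p.length := hp ▸ hconn.pos_dist_of_ne hxy
  refine ⟨p.length, f, hlen, hf.isLinearPath hp hlin,
    ⟨x, hx, ?_, fun i hi hi' ↦ hf.start_notMem hp hi hi'⟩,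
    ⟨y, hy, ?_, fun i hi ↦ hf.end_notMem hp hi⟩⟩
  · simpa using (hf 0 hlen).2.1
  · simpa [Nat.sub_add_cancel hlen] using (hf (p.length - 1) (by omega)).2.2

/-- A connected linear hypergraph contains a linear path with one
endpoint in X and one endpoint in Y, for any disjoint nonempty vertex sets X, Y. -/
theorem stmt_5 {V : Type*} [Fintype V] [DecidableEq V] (E : Finset (Finset V))
    (hlin : ∀ e ∈ E, ∀ f ∈ E, e ≠ f → (e ∩ f).card ≤ 1)
    (hconn : (shadowGraph E).Connected)
    (X Y : Finset V) (hXY : Disjoint X Y) (hX : X.Nonempty) (hY : Y.Nonempty) :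
    ∃ (ℓ : ℕ) (e : ℕ → Finset V), 1 ≤ ℓ ∧ IsLinearPath E ℓ e ∧
      (∃ x ∈ X, x ∈ e 0 ∧ ∀ i, 1 ≤ i → i < ℓ → x ∉ e i) ∧
      (∃ y ∈ Y, y ∈ e (ℓ - 1) ∧ ∀ i, i < ℓ - 1 → y ∉ e i) :=
  stmt_5_general E hlin hconn X Y hXY hX hY
end

section
/- Let H be a linear 3-partite 3-uniform hypergraph with 3-partition (V_1, V_2, V_3) and average degree at least 3p/2. Then there exists a vertex u in V_1 such that for each ℓ ∈ {1,...,p}, the shadow of H contains an extendable path of length ℓ from u to some vertex of V_2. -/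
/-!
Deleting vertices of degree at most `p / 2` one at a time preserves `p |W| ≤ 2 |E|`, so it ends
in a nonempty subfamily in which every vertex has degree greater than `p / 2`. There we grow, from
`u ∈ V₁`, a path alternating between `V₁` and `V₃` whose `j`-th edge meets the path only in
`v j` and `v (j + 1)`. An edge at `v m` through an earlier `v k` forces `k` to have the other
parity and, by linearity, there is at most one such edge for each `k`; this leaves an edge at `v m`
avoiding the path as long as `m < p`. The last edge of the path is such an edge, left through its
vertex in `V₂`.
-/

open Finset Function

section

variable {V : Type*}

structure IsTightPath (F : Finset (Finset V)) (v : ℕ → V) (f : ℕ → Finset V) (m : ℕ) : Prop where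
  mem : ∀ j < m, f j ∈ F
  ne_succ : ∀ j < m, v j ≠ v (j + 1)
  mem_iff : ∀ j < m, ∀ k ≤ m, v k ∈ f j ↔ k = j ∨ k = j + 1

def IsExtendablePath (F : Finset (Finset V)) (v : ℕ → V) (f : ℕ → Finset V) (ℓ : ℕ) : Prop :=
  (∀ i j, i < j → j ≤ ℓ → v i ≠ v j) ∧
  (∀ i j, i < j → j < ℓ → f i ≠ f j) ∧
  (∀ i < ℓ, f i ∈ F ∧ v i ∈ f i ∧ v (i + 1) ∈ f i)

theorem IsExtendablePath.mono {E F : Finset (Finset V)} {v : ℕ → V} {f : ℕ → Finset V} {ℓ : ℕ}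
    (h : IsExtendablePath F v f ℓ) (hFE : F ⊆ E) : IsExtendablePath E v f ℓ :=
  ⟨h.1, h.2.1, fun i hi => ⟨hFE (h.2.2 i hi).1, (h.2.2 i hi).2⟩⟩

theorem IsExtendablePath.snoc {F : Finset (Finset V)} {v : ℕ → V} {f : ℕ → Finset V} {m : ℕ}
    {e : Finset V} {w : V} (h : IsExtendablePath F v f m) (he : e ∈ F) (hve : v m ∈ e)
    (hfe : ∀ j < m, f j ≠ e) (hw : w ∈ e) (hvw : ∀ k ≤ m, v k ≠ w) :
    IsExtendablePath F (update v (m + 1) w) (update f m e) (m + 1) := by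
  refine ⟨fun i j hij hj => ?_, fun i j hij hj => ?_, fun i hi => ?_⟩
  · rw [update_of_ne (by omega)]
    obtain hj | rfl := hj.lt_or_eq
    · rw [update_of_ne (by omega)]
      exact h.1 i j hij (by omega)
    · rw [update_self]
      exact hvw i (by omega)
  · rw [update_of_ne (by omega)]
    obtain hj | rfl := Nat.lt_succ_iff_lt_or_eq.1 hj
    · rw [update_of_ne (by omega)]
      exact h.2.1 i j hij hj
    · rw [update_self]
      exact hfe i hij
  · rw [update_of_ne (by omega : i ≠ m + 1)]
    obtain hi | rfl := Nat.lt_succ_iff_lt_or_eq.1 hi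
    · rw [update_of_ne (by omega), update_of_ne (by omega)]
      exact h.2.2 i hi
    · rw [update_self, update_self]
      exact ⟨he, hve, hw⟩

namespace IsTightPath

variable {F : Finset (Finset V)} {v : ℕ → V} {f : ℕ → Finset V} {m : ℕ}

theorem zero (F : Finset (Finset V)) (v : ℕ → V) (f : ℕ → Finset V) : IsTightPath F v f 0 :=
  ⟨by simp, by simp, by simp⟩

theorem left_mem (h : IsTightPath F v f m) {j : ℕ} (hj : j < m) : v j ∈ f j :=
  (h.mem_iff j hj j hj.le).2 (Or.inl rfl)

theorem right_mem (h : IsTightPath F v f m) {j : ℕ} (hj : j < m) : v (j + 1) ∈ f j :=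
  (h.mem_iff j hj (j + 1) hj).2 (Or.inr rfl)

theorem vertex_ne (h : IsTightPath F v f m) {i j : ℕ} (hij : i < j) (hj : j ≤ m) : v i ≠ v j := by
  obtain rfl | hij := eq_or_lt_of_le (Nat.succ_le_of_lt hij)
  · exact h.ne_succ i (by omega)
  · intro hv
    have hmem : v j ∈ f (j - 1) := by
      simpa [Nat.sub_add_cancel (by omega : 1 ≤ j)] using h.right_mem (j := j - 1) (by omega)
    have := (h.mem_iff (j - 1) (by omega) i (by omega)).1 (hv ▸ hmem)
    omega

theorem isExtendablePath (h : IsTightPath F v f m) : IsExtendablePath F v f m := by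
  refine ⟨fun i j => h.vertex_ne, fun i j hij hj hf => ?_, fun i hi =>
    ⟨h.mem i hi, h.left_mem hi, h.right_mem hi⟩⟩
  have := (h.mem_iff i (by omega) (j + 1) hj).1 (hf ▸ h.right_mem hj)
  omega

theorem snoc (h : IsTightPath F v f m) {e : Finset V} {w : V} (he : e ∈ F) (hve : v m ∈ e)
    (hfresh : ∀ k < m, v k ∉ e) (hw : w ∈ e) (hvw : v m ≠ w) (hwf : ∀ j < m, w ∉ f j) :
    IsTightPath F (update v (m + 1) w) (update f m e) (m + 1) := by
  have hv : ∀ k ≤ m, update v (m + 1) w k = v k := fun k hk => update_of_ne (by omega) _ _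
  refine ⟨fun j hj => ?_, fun j hj => ?_, fun j hj k hk => ?_⟩
  · obtain hj | rfl := Nat.lt_succ_iff_lt_or_eq.1 hj
    · rw [update_of_ne (by omega)]
      exact h.mem j hj
    · rwa [update_self]
  · rw [hv j (by omega)]
    obtain hj | rfl := Nat.lt_succ_iff_lt_or_eq.1 hj
    · rw [hv (j + 1) hj]
      exact h.ne_succ j hj
    · rwa [update_self]
  · obtain hj | rfl := Nat.lt_succ_iff_lt_or_eq.1 hj
    · rw [update_of_ne (by omega)]
      obtain hk | rfl := hk.lt_or_eq
      · rw [hv k (by omega)]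
        exact h.mem_iff j hj k (by omega)
      · rw [update_self]
        simp only [hwf j hj, false_iff]
        omega
    · rw [update_self]
      obtain hk | rfl := hk.lt_or_eq
      · rw [hv k (by omega)]
        obtain hk | rfl := (Nat.lt_succ_iff.1 hk).lt_or_eq
        · simp only [hfresh k hk, false_iff]
          omega
        · simpa using hve
      · simpa using hw

end IsTightPath

section Alternate

variable {A B C : Finset V}

def alternate (A B : Finset V) (j : ℕ) : Finset V := if j % 2 = 0 then A else B

theorem alternate_eq_of_mod_two_eq {i j : ℕ} (h : i % 2 = j % 2) :
    alternate A B i = alternate A B j := by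
  simp only [alternate, h]

theorem disjoint_alternate_succ (hAB : Disjoint A B) (j : ℕ) :
    Disjoint (alternate A B j) (alternate A B (j + 1)) := by
  unfold alternate
  split_ifs <;> first | omega | exact hAB | exact hAB.symm

theorem disjoint_alternate (hAC : Disjoint A C) (hBC : Disjoint B C) (j : ℕ) :
    Disjoint (alternate A B j) C := by
  unfold alternate
  split_ifs <;> assumption

end Alternate

variable [DecidableEq V]

def vertexDegree (F : Finset (Finset V)) (x : V) : ℕ := #{e ∈ F | x ∈ e}

def IsLinearFamily (F : Finset (Finset V)) : Prop :=
  ∀ e ∈ F, ∀ f ∈ F, e ≠ f → #(e ∩ f) ≤ 1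

theorem IsLinearFamily.mono {E F : Finset (Finset V)} (hE : IsLinearFamily E) (hFE : F ⊆ E) :
    IsLinearFamily F :=
  fun e he f hf => hE e (hFE he) f (hFE hf)

theorem exists_mem_of_card_inter_eq_one {e P : Finset V} (h : #(e ∩ P) = 1) :
    ∃ x ∈ e, x ∈ P := by
  obtain ⟨x, hx⟩ := card_pos.1 (h ▸ one_pos)
  exact ⟨x, mem_inter.1 hx⟩

theorem eq_of_card_inter_eq_one {e P : Finset V} (h : #(e ∩ P) = 1) {x y : V}
    (hx : x ∈ e) (hxP : x ∈ P) (hy : y ∈ e) (hyP : y ∈ P) : x = y :=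
  card_le_one.1 h.le x (mem_inter.2 ⟨hx, hxP⟩) y (mem_inter.2 ⟨hy, hyP⟩)

theorem IsLinearFamily.card_filter_mem_mem_le_one {F : Finset (Finset V)}
    (hF : IsLinearFamily F) {x y : V} (hxy : x ≠ y) : #{e ∈ F | x ∈ e ∧ y ∈ e} ≤ 1 := by
  refine card_le_one.2 fun e he f hf => ?_
  rw [mem_filter] at he hf
  by_contra hef
  have hsub : {x, y} ⊆ e ∩ f := by
    intro z hz
    simp only [mem_insert, mem_singleton] at hz
    rcases hz with rfl | rfl <;> simp [he.2, hf.2]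
  have := (card_le_card hsub).trans (hF e he.1 f hf.1 hef)
  rw [card_pair hxy] at this
  omega

theorem IsLinearFamily.exists_mem_forall_notMem {F : Finset (Finset V)} (hF : IsLinearFamily F)
    {x : V} {T : Finset V} (hxT : x ∉ T) (hT : #T < vertexDegree F x) :
    ∃ e ∈ F, x ∈ e ∧ ∀ y ∈ T, y ∉ e := by
  by_contra! hmeet
  have hsub : {e ∈ F | x ∈ e} ⊆ T.biUnion fun y => {e ∈ F | x ∈ e ∧ y ∈ e} := by
    intro e he
    rw [mem_filter] at he
    obtain ⟨y, hyT, hye⟩ := hmeet e he.1 he.2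
    exact mem_biUnion.2 ⟨y, hyT, mem_filter.2 ⟨he.1, he.2, hye⟩⟩
  have hle : vertexDegree F x ≤ #T := calc
    vertexDegree F x ≤ ∑ y ∈ T, #{e ∈ F | x ∈ e ∧ y ∈ e} :=
      (card_le_card hsub).trans card_biUnion_le
    _ ≤ ∑ _y ∈ T, 1 :=
      sum_le_sum fun y hy => hF.card_filter_mem_mem_le_one fun h => hxT (h ▸ hy)
    _ = #T := by simp
  omega

theorem exists_subset_forall_lt_two_mul_vertexDegree {p : ℕ} (hp : 0 < p)
    (W : Finset V) {E : Finset (Finset V)} (hEW : ∀ e ∈ E, e ⊆ W) (hE : ∀ e ∈ E, 2 ≤ #e)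
    (hW : W.Nonempty) (hdens : p * #W ≤ 2 * #E) :
    ∃ F ⊆ E, F.Nonempty ∧ ∀ e ∈ F, ∀ x ∈ e, p < 2 * vertexDegree F x := by
  induction W using Finset.strongInduction generalizing E with
  | H W ih =>
  have hEne : E.Nonempty := card_pos.1 (by nlinarith [card_pos.2 hW])
  by_cases hlow : ∃ x ∈ W, 2 * vertexDegree E x ≤ p
  · obtain ⟨x, hxW, hx⟩ := hlow
    obtain ⟨e, he⟩ := hEne
    obtain ⟨y, hye, hyx⟩ := exists_mem_ne (hE e he) x
    have hsplit := card_filter_add_card_filter_not (s := E) (fun e => x ∈ e)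
    have hcard := card_erase_add_one hxW
    obtain ⟨F, hF, hFne, hmin⟩ := ih (W.erase x) (erase_ssubset hxW)
      (E := {e ∈ E | x ∉ e})
      (fun e he => by
        rw [mem_filter] at he
        exact fun z hz => mem_erase.2 ⟨by rintro rfl; exact he.2 hz, hEW e he.1 hz⟩)
      (fun e he => hE e (mem_filter.1 he).1)
      ⟨y, mem_erase.2 ⟨hyx, hEW e he hye⟩⟩
      (by unfold vertexDegree at hx; nlinarith)
    exact ⟨F, hF.trans (filter_subset _ _), hFne, hmin⟩
  · push Not at hlow
    exact ⟨E, subset_rfl, hEne, fun e he x hx => hlow x (hEW e he hx)⟩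

variable {F : Finset (Finset V)} {A B C : Finset V}

theorem card_inter_alternate {e : Finset V} (hA : #(e ∩ A) = 1) (hB : #(e ∩ B) = 1) (j : ℕ) :
    #(e ∩ alternate A B j) = 1 := by
  unfold alternate
  split_ifs <;> assumption

variable {v : ℕ → V} {f : ℕ → Finset V} {m : ℕ}

/-- Earlier path vertices lying in the part of `v m` cannot share an edge with `v m`, so only the
`⌈m/2⌉` vertices `v (m - 1 - 2 * i)` can block edges at `v m`, each at most one by linearity. -/
theorem IsTightPath.exists_fresh_edge (hF : IsLinearFamily F)
    (hA : ∀ e ∈ F, #(e ∩ A) = 1) (hB : ∀ e ∈ F, #(e ∩ B) = 1) (h : IsTightPath F v f m)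
    (halt : ∀ j ≤ m, v j ∈ alternate A B j) (hdeg : m + 1 < 2 * vertexDegree F (v m)) :
    ∃ e ∈ F, v m ∈ e ∧ ∀ k < m, v k ∉ e := by
  set T := (range ((m + 1) / 2)).image fun i => v (m - 1 - 2 * i)
  have hmT : v m ∉ T := by
    simp only [T, mem_image, mem_range, not_exists, not_and]
    exact fun i hi => h.vertex_ne (by omega) le_rfl
  have hT : #T < vertexDegree F (v m) :=
    card_image_le.trans_lt (by rw [card_range]; omega)
  obtain ⟨e, he, hme, hTe⟩ := hF.exists_mem_forall_notMem hmT hT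
  refine ⟨e, he, hme, fun k hk hke => ?_⟩
  by_cases hpar : k % 2 = m % 2
  · have hkm := eq_of_card_inter_eq_one (card_inter_alternate (hA e he) (hB e he) m)
      hke (alternate_eq_of_mod_two_eq hpar ▸ halt k hk.le) hme (halt m le_rfl)
    exact h.vertex_ne hk le_rfl hkm
  · refine hTe (v k) (mem_image.2 ⟨(m - 1 - k) / 2, mem_range.2 (by omega), ?_⟩) hke
    congr 1
    omega

theorem exists_tight_alternating_path {p : ℕ} (hF : IsLinearFamily F) (hAB : Disjoint A B)
    (hA : ∀ e ∈ F, #(e ∩ A) = 1) (hB : ∀ e ∈ F, #(e ∩ B) = 1)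
    (hmin : ∀ e ∈ F, ∀ x ∈ e, p < 2 * vertexDegree F x) {u : V}
    (hu : p < 2 * vertexDegree F u) (huA : u ∈ A) :
    ∀ m < p, ∃ (v : ℕ → V) (f : ℕ → Finset V), v 0 = u ∧ IsTightPath F v f m ∧
      (∀ j ≤ m, v j ∈ alternate A B j) ∧ p < 2 * vertexDegree F (v m) := by
  intro m
  induction m with
  | zero =>
    intro _
    refine ⟨fun _ => u, fun _ => ∅, rfl, IsTightPath.zero F _ _, fun j hj => ?_, hu⟩
    rwa [Nat.le_zero.1 hj]
  | succ m ih =>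
    intro hm
    obtain ⟨v, f, hv0, hpath, halt, hdeg⟩ := ih (by omega)
    obtain ⟨e, he, hve, hfresh⟩ := hpath.exists_fresh_edge hF hA hB halt (by omega)
    obtain ⟨w, hwe, hw⟩ :=
      exists_mem_of_card_inter_eq_one (card_inter_alternate (hA e he) (hB e he) (m + 1))
    have hvw : v m ≠ w := fun hvw =>
      disjoint_left.1 (disjoint_alternate_succ hAB m) (halt m le_rfl) (hvw ▸ hw)
    -- `f j` meets the part of `w` in whichever of `v j`, `v (j + 1)` has the parity of `m + 1`
    have hwf : ∀ j < m, w ∉ f j := by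
      intro j hj hwf
      obtain ⟨t, htj, ht⟩ : ∃ t, (t = j ∨ t = j + 1) ∧ t % 2 = (m + 1) % 2 :=
        ⟨if j % 2 = (m + 1) % 2 then j else j + 1, by split_ifs <;> omega⟩
      have hfj := hpath.mem j hj
      have hvt := eq_of_card_inter_eq_one (card_inter_alternate (hA _ hfj) (hB _ hfj) (m + 1))
        ((hpath.mem_iff j hj t (by omega)).2 htj)
        (alternate_eq_of_mod_two_eq ht ▸ halt t (by omega)) hwf hw
      exact hfresh t (by omega) (hvt ▸ hwe)
    refine ⟨update v (m + 1) w, update f m e, by rwa [update_of_ne (by omega)],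
      hpath.snoc he hve hfresh hwe hvw hwf, fun j hj => ?_,
      by rw [update_self]; exact hmin e he w hwe⟩
    obtain hj | rfl := hj.lt_or_eq
    · rw [update_of_ne (by omega)]
      exact halt j (by omega)
    · rwa [update_self]

theorem exists_extendable_path_to {p : ℕ} (hF : IsLinearFamily F) (hAB : Disjoint A B)
    (hAC : Disjoint A C) (hBC : Disjoint B C)
    (hA : ∀ e ∈ F, #(e ∩ A) = 1) (hB : ∀ e ∈ F, #(e ∩ B) = 1) (hC : ∀ e ∈ F, #(e ∩ C) = 1)
    (hmin : ∀ e ∈ F, ∀ x ∈ e, p < 2 * vertexDegree F x) {u : V}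
    (hu : p < 2 * vertexDegree F u) (huA : u ∈ A) {ℓ : ℕ} (hℓ : 1 ≤ ℓ) (hℓp : ℓ ≤ p) :
    ∃ (v : ℕ → V) (f : ℕ → Finset V), v 0 = u ∧ v ℓ ∈ C ∧ IsExtendablePath F v f ℓ := by
  obtain ⟨m, rfl⟩ : ∃ m, ℓ = m + 1 := ⟨ℓ - 1, by omega⟩
  obtain ⟨v, f, hv0, hpath, halt, hdeg⟩ :=
    exists_tight_alternating_path hF hAB hA hB hmin hu huA m (by omega)
  obtain ⟨e, he, hve, hfresh⟩ := hpath.exists_fresh_edge hF hA hB halt (by omega)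
  obtain ⟨z, hze, hz⟩ := exists_mem_of_card_inter_eq_one (hC e he)
  have hvz : ∀ k ≤ m, v k ≠ z := fun k hk hkz =>
    disjoint_left.1 (disjoint_alternate hAC hBC k) (halt k hk) (hkz ▸ hz)
  refine ⟨update v (m + 1) z, update f m e, by rwa [update_of_ne (by omega)], by rwa [update_self],
    hpath.isExtendablePath.snoc he hve (fun j hj hfe => hfresh j hj (hfe ▸ hpath.left_mem hj))
      hze hvz⟩

end

theorem stmt_6_general {V : Type*} [Fintype V] [DecidableEq V] [Nonempty V]
    (E : Finset (Finset V)) (hU : ∀ e ∈ E, e.card = 3)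
    (hlin : ∀ e ∈ E, ∀ f ∈ E, e ≠ f → (e ∩ f).card ≤ 1)
    (V₁ V₂ V₃ : Finset V)
    (hpart : ∀ e ∈ E, (e ∩ V₁).card = 1 ∧ (e ∩ V₂).card = 1 ∧ (e ∩ V₃).card = 1)
    (hdisj : Disjoint V₁ V₂ ∧ Disjoint V₁ V₃ ∧ Disjoint V₂ V₃)
    (p : ℕ) (hp : 1 ≤ p)
    (hdeg : (3 * p : ℚ) / 2 * (Fintype.card V : ℚ) ≤ 3 * (E.card : ℚ)) :
    ∃ u ∈ V₁, ∀ ℓ, 1 ≤ ℓ → ℓ ≤ p →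
      ∃ (v : ℕ → V) (f : ℕ → Finset V),
        v 0 = u ∧ v ℓ ∈ V₂ ∧
        (∀ i j, i < j → j ≤ ℓ → v i ≠ v j) ∧
        (∀ i j, i < j → j < ℓ → f i ≠ f j) ∧
        (∀ i < ℓ, f i ∈ E ∧ v i ∈ f i ∧ v (i + 1) ∈ f i) := by
  obtain ⟨hd12, hd13, hd23⟩ := hdisj
  have hdens : p * #(univ : Finset V) ≤ 2 * #E := by
    rw [card_univ]
    exact_mod_cast (by linarith : (p * Fintype.card V : ℚ) ≤ 2 * #E)
  obtain ⟨F, hFE, ⟨e₀, he₀⟩, hmin⟩ := exists_subset_forall_lt_two_mul_vertexDegree hp univ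
    (fun e _ => subset_univ e) (fun e he => by rw [hU e he]; norm_num) univ_nonempty hdens
  obtain ⟨u, hue₀, huV₁⟩ := exists_mem_of_card_inter_eq_one (hpart e₀ (hFE he₀)).1
  refine ⟨u, huV₁, fun ℓ hℓ hℓp => ?_⟩
  obtain ⟨v, f, hv0, hvℓ, hpath⟩ := exists_extendable_path_to (IsLinearFamily.mono hlin hFE)
    hd13 hd12 hd23.symm (fun e he => (hpart e (hFE he)).1) (fun e he => (hpart e (hFE he)).2.2)
    (fun e he => (hpart e (hFE he)).2.1) hmin (hmin e₀ he₀ u hue₀) huV₁ hℓ hℓp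
  exact ⟨v, f, hv0, hvℓ, hpath.mono hFE⟩

/-- Let H be a linear 3-partite 3-uniform hypergraph with parts
(V₁, V₂, V₃) and average degree at least 3p/2. Then there is a vertex u ∈ V₁ such
that for every ℓ ∈ {1,...,p} the shadow of H contains an extendable path of length ℓ
from u to a vertex of V₂.  The extendable path of length ℓ is given by vertices
v 0 = u, v 1, ..., v ℓ (pairwise distinct) together with distinct hyperedges
f 0, ..., f (ℓ-1) with v i, v (i+1) ∈ f i. -/
theorem stmt_6 {V : Type*} [Fintype V] [DecidableEq V] [Nonempty V]
    (E : Finset (Finset V)) (hU : ∀ e ∈ E, e.card = 3)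
    (hlin : ∀ e ∈ E, ∀ f ∈ E, e ≠ f → (e ∩ f).card ≤ 1)
    (V₁ V₂ V₃ : Finset V)
    (hpart : ∀ e ∈ E, (e ∩ V₁).card = 1 ∧ (e ∩ V₂).card = 1 ∧ (e ∩ V₃).card = 1)
    (hdisj : Disjoint V₁ V₂ ∧ Disjoint V₁ V₃ ∧ Disjoint V₂ V₃)
    (hcover : V₁ ∪ V₂ ∪ V₃ = Finset.univ)
    (p : ℕ) (hp : 1 ≤ p)
    (hdeg : (3 * p : ℚ) / 2 * (Fintype.card V : ℚ) ≤ 3 * (E.card : ℚ)) :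
    ∃ u ∈ V₁, ∀ ℓ, 1 ≤ ℓ → ℓ ≤ p →
      ∃ (v : ℕ → V) (f : ℕ → Finset V),
        v 0 = u ∧ v ℓ ∈ V₂ ∧
        (∀ i j, i < j → j ≤ ℓ → v i ≠ v j) ∧
        (∀ i j, i < j → j < ℓ → f i ≠ f j) ∧
        (∀ i < ℓ, f i ∈ E ∧ v i ∈ f i ∧ v (i + 1) ∈ f i) :=
  stmt_6_general E hU hlin V₁ V₂ V₃ hpart hdisj p hp hdeg
end

section
/- Let r ≥ 3 and let P be an r-uniform tight path of length m+1. Then P contains a Berge cycle of every length ℓ with 3 ≤ ℓ ≤ m. -/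
/-- `HasBergeCycle E ℓ`: the hypergraph with edge set `E` contains a Berge cycle
of length ℓ: ℓ distinct hyperedges e 0, ..., e (ℓ-1) and ℓ distinct vertices
v 0, ..., v (ℓ-1) with v i, v (i+1) ∈ e i (indices cyclic). -/
def HasBergeCycle {V : Type*} (E : Finset (Finset V)) (ℓ : ℕ) : Prop :=
  ∃ (e : ZMod ℓ → Finset V) (v : ZMod ℓ → V),
    Function.Injective e ∧ Function.Injective v ∧
    (∀ i, e i ∈ E) ∧ (∀ i, v i ∈ e i ∧ v (i + 1) ∈ e i)

/-!
Visit the positions `1, …, ℓ` of the path in the zigzag order `1, 3, 5, …` up, then `…, 6, 4, 2`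
down, and back to `1`. Consecutive positions are at most two apart, so for `r ≥ 3` the edge
starting at the smaller of the two contains both. These starting points are `1, …, ℓ - 1`, and
the closing step `2 → 1` uses the edge starting at `0`, so all `ℓ` edges are distinct.
-/

open Function

def zigzag (ℓ i : ℕ) : ℕ := if 2 * i + 1 ≤ ℓ then 2 * i + 1 else 2 * (ℓ - i)

def zigzagStart (ℓ i : ℕ) : ℕ :=
  if i + 1 = ℓ then 0 else min (zigzag ℓ i) (zigzag ℓ (i + 1))

lemma zigzag_injOn {ℓ i j : ℕ} (hi : i < ℓ) (hj : j < ℓ) (h : zigzag ℓ i = zigzag ℓ j) :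
    i = j := by
  unfold zigzag at h; split_ifs at h <;> omega

lemma zigzagStart_injOn {ℓ i j : ℕ} (hi : i < ℓ) (hj : j < ℓ)
    (h : zigzagStart ℓ i = zigzagStart ℓ j) : i = j := by
  unfold zigzagStart zigzag at h; split_ifs at h <;> omega

lemma zigzagStart_lt {ℓ i : ℕ} (hi : i < ℓ) : zigzagStart ℓ i < ℓ := by
  unfold zigzagStart zigzag; split_ifs <;> omega

lemma zigzagStart_le_zigzag {ℓ i : ℕ} (hi : i < ℓ) :
    zigzagStart ℓ i ≤ zigzag ℓ i ∧ zigzag ℓ i ≤ zigzagStart ℓ i + 2 := by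
  unfold zigzagStart zigzag; split_ifs <;> omega

lemma zigzagStart_le_zigzag_succ {ℓ i : ℕ} (hi : i < ℓ) :
    zigzagStart ℓ i ≤ zigzag ℓ ((i + 1) % ℓ) ∧ zigzag ℓ ((i + 1) % ℓ) ≤ zigzagStart ℓ i + 2 := by
  rcases Nat.lt_or_ge (i + 1) ℓ with h | h
  · rw [Nat.mod_eq_of_lt h]; unfold zigzagStart zigzag; split_ifs <;> omega
  · rw [show i + 1 = ℓ by omega, Nat.mod_self]; unfold zigzagStart zigzag; split_ifs <;> omega

lemma exists_cyclic_windows (ℓ : ℕ) [NeZero ℓ] :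
    ∃ pos start : ZMod ℓ → ℕ, Injective pos ∧ Injective start ∧ (∀ i, start i < ℓ) ∧
      (∀ i, start i ≤ pos i ∧ pos i ≤ start i + 2) ∧
      (∀ i, start i ≤ pos (i + 1) ∧ pos (i + 1) ≤ start i + 2) := by
  refine ⟨fun i => zigzag ℓ i.val, fun i => zigzagStart ℓ i.val,
    fun i j h => ZMod.val_injective ℓ (zigzag_injOn i.val_lt j.val_lt h),
    fun i j h => ZMod.val_injective ℓ (zigzagStart_injOn i.val_lt j.val_lt h),
    fun i => zigzagStart_lt i.val_lt, fun i => zigzagStart_le_zigzag i.val_lt, fun i => ?_⟩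
  show zigzagStart ℓ i.val ≤ zigzag ℓ (i + 1).val ∧ zigzag ℓ (i + 1).val ≤ zigzagStart ℓ i.val + 2
  rw [ZMod.val_add, ZMod.val_one_eq_one_mod, Nat.add_mod_mod]
  exact zigzagStart_le_zigzag_succ i.val_lt

section TightPath

variable {V : Type*} [DecidableEq V]

def tightPathEdges (v : ℕ → V) (r m : ℕ) : Finset (Finset V) :=
  (Finset.range (m + 1)).image fun i => (Finset.Ico i (i + r)).image v

lemma le_of_mem_image_Ico {v : ℕ → V} {n a b r : ℕ} (hv : Set.InjOn v (Set.Iio n))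
    (ha : a < n) (hb : b + r ≤ n) (h : v a ∈ (Finset.Ico b (b + r)).image v) : b ≤ a := by
  obtain ⟨k, hk, hka⟩ := Finset.mem_image.mp h
  rw [Finset.mem_Ico] at hk
  have : k = a := hv (Set.mem_Iio.mpr (by omega)) (Set.mem_Iio.mpr ha) hka
  omega

lemma image_Ico_injOn {v : ℕ → V} {n a b r : ℕ} (hv : Set.InjOn v (Set.Iio n)) (hr : 0 < r)
    (ha : a + r ≤ n) (hb : b + r ≤ n)
    (h : (Finset.Ico a (a + r)).image v = (Finset.Ico b (b + r)).image v) : a = b := by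
  have mem_self : ∀ c, v c ∈ (Finset.Ico c (c + r)).image v := fun c =>
    Finset.mem_image_of_mem v (Finset.mem_Ico.mpr ⟨le_rfl, by omega⟩)
  apply le_antisymm
  · exact le_of_mem_image_Ico hv (by omega) ha (h ▸ mem_self b)
  · exact le_of_mem_image_Ico hv (by omega) hb (h ▸ mem_self a)

theorem hasBergeCycle_tightPathEdges_of_windows {v : ℕ → V} {r m ℓ : ℕ}
    (hv : Set.InjOn v (Set.Iio (m + r))) (pos start : ZMod ℓ → ℕ) (hpos : Injective pos)
    (hstart : Injective start) (hstart_le : ∀ i, start i ≤ m)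
    (hcur : ∀ i, start i ≤ pos i ∧ pos i < start i + r)
    (hnext : ∀ i, start i ≤ pos (i + 1) ∧ pos (i + 1) < start i + r) :
    HasBergeCycle (tightPathEdges v r m) ℓ := by
  have hr : 0 < r := by have := hcur 0; omega
  refine ⟨fun i => (Finset.Ico (start i) (start i + r)).image v, fun i => v (pos i),
    fun i j h => hstart (image_Ico_injOn hv hr (by grind) (by grind) h),
    fun i j h => hpos (hv (Set.mem_Iio.mpr (by grind)) (Set.mem_Iio.mpr (by grind)) h),
    fun i => Finset.mem_image.mpr ⟨start i, Finset.mem_range.mpr (by grind), rfl⟩,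
    fun i => ⟨?_, ?_⟩⟩
  · exact Finset.mem_image_of_mem v (Finset.mem_Ico.mpr (hcur i))
  · exact Finset.mem_image_of_mem v (Finset.mem_Ico.mpr (hnext i))

end TightPath

/-- An r-uniform tight path of length m+1 (r ≥ 3) contains Berge
cycles of every length ℓ with 3 ≤ ℓ ≤ m. -/
theorem stmt_7 {V : Type*} [DecidableEq V] (r m : ℕ) (hr : 3 ≤ r) (v : ℕ → V)
    (hinj : ∀ i j, i < m + r → j < m + r → v i = v j → i = j)
    (E : Finset (Finset V))
    (hE : E = (Finset.range (m + 1)).image (fun i => (Finset.Ico i (i + r)).image v)) :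
    ∀ ℓ, 3 ≤ ℓ → ℓ ≤ m → HasBergeCycle E ℓ := by
  intro ℓ hℓ hℓm
  have : NeZero ℓ := ⟨by omega⟩
  obtain ⟨pos, start, hpos, hstart, hstart_lt, hcur, hnext⟩ := exists_cyclic_windows ℓ
  rw [hE]
  exact hasBergeCycle_tightPathEdges_of_windows (fun i hi j hj h => hinj i j hi hj h) pos start
    hpos hstart (fun i => by grind) (fun i => by grind) (fun i => by grind)
end

section
/- Let r ≥ 3 and let H be an r-uniform hypergraph in which every (r−1)-subset of vertices that is contained in at least one edge is contained in at least k+1 edges. Then H contains a Berge cycle of every length ℓ with 3 ≤ ℓ ≤ k+2. -/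
open Finset Function

section

variable {V : Type*} {E : Finset (Finset V)}

theorem hasBergeCycle_of_injOn {m : ℕ} {v : ℕ → V} {e : ℕ → Finset V}
    (hv : Set.InjOn v (Set.Iic m)) (he : Set.InjOn e (Set.Iic m)) (hE : ∀ i ≤ m, e i ∈ E)
    (hve : ∀ i ≤ m, v i ∈ e i ∧ v ((i + 1) % (m + 1)) ∈ e i) :
    HasBergeCycle E (m + 1) := by
  have hle (i : ZMod (m + 1)) : i.val ≤ m := Nat.lt_succ_iff.1 i.val_lt
  have hsucc (i : ZMod (m + 1)) : (i + 1).val = (i.val + 1) % (m + 1) := by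
    rw [ZMod.val_add, ZMod.val_one_eq_one_mod, Nat.add_mod_mod]
  refine ⟨fun i => e i.val, fun i => v i.val, ?_, ?_, fun i => hE _ (hle i), fun i => ?_⟩
  · exact fun i j h => ZMod.val_injective _ (he (hle i) (hle j) h)
  · exact fun i j h => ZMod.val_injective _ (hv (hle i) (hle j) h)
  · simpa only [hsucc] using hve _ (hle i)

variable [DecidableEq V]

theorem exists_insert_mem_of_le_card_filter {k : ℕ} {T F : Finset V}
    (hU : ∀ e ∈ E, e.card = T.card + 1) (hT : k + 1 ≤ (E.filter (T ⊆ ·)).card)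
    (hF : F.card ≤ k) : ∃ z ∉ T, z ∉ F ∧ insert z T ∈ E := by
  by_contra! h
  have hsub : E.filter (T ⊆ ·) ⊆ F.image (insert · T) := by
    intro f hf
    obtain ⟨hfE, hTf⟩ := mem_filter.1 hf
    obtain ⟨z, hzT, rfl⟩ := exists_eq_insert_iff.2 ⟨hTf, (hU f hfE).symm⟩
    by_contra hzF
    exact h z hzT (fun hz => hzF (mem_image_of_mem _ hz)) hfE
  have := (card_le_card hsub).trans card_image_le
  omega

def corePathEdge (R : Finset V) (x : ℕ → V) (i : ℕ) : Finset V :=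
  insert (x i) (insert (x (i + 1)) R)

structure IsCorePath (E : Finset (Finset V)) (R : Finset V) (x : ℕ → V) (m : ℕ) : Prop where
  injOn : Set.InjOn x (Set.Iic m)
  notMem : ∀ i ≤ m, x i ∉ R
  edge_mem : ∀ i < m, corePathEdge R x i ∈ E

namespace IsCorePath

variable {R : Finset V} {x : ℕ → V} {m : ℕ}

theorem eq_or_eq_succ_of_mem_corePathEdge (hx : IsCorePath E R x m) {i j : ℕ} (hi : i < m)
    (hj : j ≤ m) (h : x j ∈ corePathEdge R x i) : j = i ∨ j = i + 1 := by
  simp only [corePathEdge, mem_insert] at h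
  rcases h with h | h | h
  · exact Or.inl (hx.injOn (Set.mem_Iic.2 hj) (Set.mem_Iic.2 hi.le) h)
  · exact Or.inr (hx.injOn (Set.mem_Iic.2 hj) (Set.mem_Iic.2 hi) h)
  · exact absurd h (hx.notMem j hj)

theorem injOn_corePathEdge (hx : IsCorePath E R x m) :
    Set.InjOn (corePathEdge R x) (Set.Iio m) := by
  have key {i j : ℕ} (hij : i < j) (hj : j < m) : corePathEdge R x i ≠ corePathEdge R x j :=
    fun h => by
      have := hx.eq_or_eq_succ_of_mem_corePathEdge (hij.trans hj) hj
        (h ▸ mem_insert_of_mem (mem_insert_self _ _))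
      omega
  intro i hi j hj h
  rcases lt_trichotomy i j with hij | rfl | hij
  · exact absurd h (key hij hj)
  · rfl
  · exact absurd h.symm (key hij hi)

theorem extend {k : ℕ} (hx : IsCorePath E R x m) (hU : ∀ e ∈ E, e.card = R.card + 2)
    (hcodeg : k + 1 ≤ (E.filter (insert (x m) R ⊆ ·)).card) (hm : m ≤ k) :
    ∃ z, IsCorePath E R (update x (m + 1) z) (m + 1) := by
  have hxm := hx.notMem m le_rfl
  obtain ⟨z, hzT, hzF, hzE⟩ := exists_insert_mem_of_le_card_filter (F := (range m).image x)
    (fun e he => by rw [hU e he, card_insert_of_notMem hxm]) hcodeg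
    (card_image_le.trans (by simpa using hm))
  have hzx : ∀ i ≤ m, x i ≠ z := by
    intro i hi h
    rcases hi.lt_or_eq with hi | rfl
    · exact hzF (mem_image.2 ⟨i, mem_range.2 hi, h⟩)
    · exact hzT (h ▸ mem_insert_self _ _)
  refine ⟨z, ⟨?_, fun i hi => ?_, fun i hi => ?_⟩⟩
  · rw [show Set.Iic (m + 1) = insert (m + 1) (Set.Iic m) from Order.Iic_succ m,
      Set.injOn_insert (by simp)]
    refine ⟨hx.injOn.congr fun i hi => (update_of_ne (by simp at hi; omega) _ _).symm, ?_⟩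
    rintro ⟨i, hi, h⟩
    rw [update_self, update_of_ne (by simp at hi; omega)] at h
    exact hzx i hi h
  · rcases eq_or_ne i (m + 1) with rfl | h
    · simpa using fun h => hzT (mem_insert_of_mem h)
    · rw [update_of_ne h]
      exact hx.notMem i (by omega)
  · rcases (Nat.lt_succ_iff.1 hi).lt_or_eq with hi | rfl
    · rw [corePathEdge, update_of_ne (by omega), update_of_ne (by omega)]
      exact hx.edge_mem i hi
    · rw [corePathEdge, update_of_ne (by omega), update_self, insert_comm]
      exact hzE

theorem hasBergeCycle (hx : IsCorePath E R x m) (hm : 0 < m) {b : V} (hb : b ∈ R)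
    {g : Finset V} (hg : g ∈ E) (hxg : x 0 ∈ g) (hbg : b ∈ g) (hne : g ≠ corePathEdge R x 0) :
    HasBergeCycle E (m + 1) := by
  have hIic : Set.Iic m = insert m (Set.Iio m) := Set.Iio_insert.symm
  refine hasBergeCycle_of_injOn (v := update x m b) (e := update (corePathEdge R x) m g)
    ?_ ?_ (fun i hi => ?_) (fun i hi => ?_)
  · rw [hIic, Set.injOn_insert Set.self_notMem_Iio]
    refine ⟨(hx.injOn.mono Set.Iio_subset_Iic_self).congr
      fun i hi => (update_of_ne (ne_of_lt hi) _ _).symm, ?_⟩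
    rintro ⟨i, hi, h⟩
    rw [update_self, update_of_ne (ne_of_lt hi)] at h
    exact hx.notMem i hi.le (h ▸ hb)
  · rw [hIic, Set.injOn_insert Set.self_notMem_Iio]
    refine ⟨hx.injOn_corePathEdge.congr fun i hi => (update_of_ne (ne_of_lt hi) _ _).symm, ?_⟩
    rintro ⟨i, hi, h⟩
    rw [update_self, update_of_ne (ne_of_lt hi)] at h
    rcases Nat.eq_zero_or_pos i with rfl | hi0
    · exact hne h.symm
    · have := hx.eq_or_eq_succ_of_mem_corePathEdge hi (Nat.zero_le m) (h ▸ hxg)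
      omega
  · rcases hi.lt_or_eq with hi | rfl
    · rw [update_of_ne (ne_of_lt hi)]
      exact hx.edge_mem i hi
    · rwa [update_self]
  · rcases hi.lt_or_eq with hi | rfl
    · rw [update_of_ne (ne_of_lt hi), update_of_ne (ne_of_lt hi), Nat.mod_eq_of_lt (by omega)]
      refine ⟨mem_insert_self _ _, ?_⟩
      rcases eq_or_ne (i + 1) m with h | h
      · rw [h, update_self]
        exact mem_insert_of_mem (mem_insert_of_mem hb)
      · rw [update_of_ne h]
        exact mem_insert_of_mem (mem_insert_self _ _)
    · rw [update_self, update_self, Nat.mod_self, update_of_ne hm.ne]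
      exact ⟨hbg, hxg⟩

end IsCorePath

theorem exists_isCorePath {r k : ℕ} {R : Finset V} {a : V} (hR : R.card + 2 = r)
    (hU : ∀ e ∈ E, e.card = r)
    (hcodeg : ∀ S : Finset V, S.card = r - 1 → (∃ e ∈ E, S ⊆ e) →
      k + 1 ≤ (E.filter (fun e => S ⊆ e)).card)
    (ha : a ∉ R) (haR : ∃ e ∈ E, insert a R ⊆ e) :
    ∀ m ≤ k + 1, ∃ x : ℕ → V, x 0 = a ∧ IsCorePath E R x m := by
  intro m hm
  induction m with
  | zero =>
    refine ⟨fun _ => a, rfl, ⟨fun i hi j hj _ => ?_, fun _ _ => ha, fun i hi => ?_⟩⟩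
    · exact (Nat.le_zero.1 hi).trans (Nat.le_zero.1 hj).symm
    · exact absurd hi i.not_lt_zero
  | succ m ih =>
    obtain ⟨x, hx0, hx⟩ := ih (by omega)
    have hT : ∃ e ∈ E, insert (x m) R ⊆ e := by
      cases m with
      | zero => exact hx0 ▸ haR
      | succ n => exact ⟨_, hx.edge_mem n n.lt_succ_self, subset_insert _ _⟩
    obtain ⟨z, hz⟩ := hx.extend (fun e he => (hU e he).trans hR.symm)
      (hcodeg _ (by rw [card_insert_of_notMem (hx.notMem m le_rfl)]; omega) hT) (by omega)
    exact ⟨_, by rw [update_of_ne (by omega)]; exact hx0, hz⟩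

end

theorem stmt_8_general {V : Type*} [DecidableEq V] (r k : ℕ) (hr : 3 ≤ r)
    (E : Finset (Finset V)) (hU : ∀ e ∈ E, e.card = r) (hne : E.Nonempty)
    (hcodeg : ∀ S : Finset V, S.card = r - 1 → (∃ e ∈ E, S ⊆ e) →
      k + 1 ≤ (E.filter (fun e => S ⊆ e)).card) :
    ∀ ℓ, 3 ≤ ℓ → ℓ ≤ k + 2 → HasBergeCycle E ℓ := by
  intro ℓ hℓ hℓk
  obtain ⟨m, rfl⟩ : ∃ m, ℓ = m + 1 := ⟨ℓ - 1, by omega⟩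
  obtain ⟨e₀, he₀⟩ := hne
  obtain ⟨S, hSe₀, hS⟩ := exists_subset_card_eq (s := e₀) (n := r - 1) (by rw [hU e₀ he₀]; omega)
  obtain ⟨a, ha, b, hb, hab⟩ := one_lt_card.1 (by omega : 1 < S.card)
  have hR : (S.erase a).card + 2 = r := by rw [card_erase_of_mem ha]; omega
  obtain ⟨x, hx0, hx⟩ := exists_isCorePath hR hU hcodeg (notMem_erase a S)
    ⟨e₀, he₀, by rwa [insert_erase ha]⟩ m (by omega)
  have hSx : S ⊆ corePathEdge (S.erase a) x 0 := by
    rw [corePathEdge, hx0]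
    nth_rw 1 [← insert_erase ha]
    exact insert_subset_insert _ (subset_insert _ _)
  have hcodegS := hcodeg S hS ⟨_, hx.edge_mem 0 (by omega), hSx⟩
  obtain ⟨g, hg, hne⟩ :=
    exists_mem_ne (by omega : 1 < (E.filter (S ⊆ ·)).card) (corePathEdge (S.erase a) x 0)
  obtain ⟨hgE, hSg⟩ := mem_filter.1 hg
  exact hx.hasBergeCycle (by omega) (mem_erase.2 ⟨hab.symm, hb⟩) hgE (hx0 ▸ hSg ha) (hSg hb) hne

/-- If r ≥ 3 and H is a (nonempty) r-uniform hypergraph in which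
every (r−1)-subset of vertices contained in at least one edge is contained in at
least k+1 edges, then H contains a Berge cycle of every length ℓ with 3 ≤ ℓ ≤ k+2. -/
theorem stmt_8 {V : Type*} [Fintype V] [DecidableEq V] (r k : ℕ) (hr : 3 ≤ r)
    (E : Finset (Finset V)) (hU : ∀ e ∈ E, e.card = r) (hne : E.Nonempty)
    (hcodeg : ∀ S : Finset V, S.card = r - 1 → (∃ e ∈ E, S ⊆ e) →
      k + 1 ≤ (E.filter (fun e => S ⊆ e)).card) :
    ∀ ℓ, 3 ≤ ℓ → ℓ ≤ k + 2 → HasBergeCycle E ℓ :=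
  stmt_8_general r k hr E hU hne hcodeg
end
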